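/- arXiv:2309.05372 — 6 statements merged into one kernel-verified Lean document; each statement's English description precedes it below -/
import Mathlib

section
/- Fix K > 0, τ > 0, Δ > 0, and suppose R : (0, ∞) → ℝ satisfies 0 < R(λ) ≤ Δ and the transcendental equation sin(λ·R(λ)) - sin(λ·Δ) + λ·Δ/2 = Δ·sin(λ·R(λ))·(e^{-Kλ²τ} - 1)/(2Kτ) for all λ in some interval (0, λ*). Then R(λ) tends to Δ/2 as λ tends to 0 from the right. (Since λ = π/(2r_e), this states that the boundary-dominated well-block radius converges to the steady-state Peaceman radius Δ/2 as the exterior reservoir radius r_e tends to infinity.) -/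
open Filter

/-- If `R(λ)` solves the 1-D boundary-dominated transcendental equation with
`0 < R(λ) ≤ Δ` for all small `λ > 0`, then `R(λ) → Δ/2` as `λ → 0⁺`. -/
theorem stmt_5 (K τ Δ : ℝ) (hK : 0 < K) (hτ : 0 < τ) (hΔ : 0 < Δ)
    (R : ℝ → ℝ) (lamStar : ℝ) (hlamStar : 0 < lamStar)
    (hR : ∀ lam ∈ Set.Ioo (0 : ℝ) lamStar,
      0 < R lam ∧ R lam ≤ Δ ∧
      Real.sin (lam * R lam) - Real.sin (lam * Δ) + lam * Δ / 2 =
        Δ * Real.sin (lam * R lam) *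
          (Real.exp (-(K * lam ^ 2 * τ)) - 1) / (2 * K * τ)) :
    Tendsto R (nhdsWithin (0 : ℝ) (Set.Ioi 0)) (nhds (Δ / 2)) := by
  set l := nhdsWithin (0 : ℝ) (Set.Ioi 0) with hl
  have hmem : ∀ᶠ lam in l, lam ∈ Set.Ioo (0 : ℝ) lamStar :=
    mem_of_superset (Ioo_mem_nhdsGT_of_mem ⟨le_refl 0, hlamStar⟩) (fun x hx => hx)
  set g : ℝ → ℝ := fun lam => lam * R lam with hg
  -- sinc limit
  have hsinc : Tendsto (fun x : ℝ => Real.sin x / x) (nhdsWithin 0 {(0:ℝ)}ᶜ) (nhds 1) := by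
    have h := (Real.hasDerivAt_sin 0)
    rw [hasDerivAt_iff_tendsto_slope] at h
    simp only [Real.cos_zero] at h
    refine h.congr' ?_
    filter_upwards with x
    simp [slope_def_field]
  -- g tends to 0 within Ioi 0
  have hgpos : ∀ᶠ lam in l, 0 < g lam ∧ g lam ≤ lam * Δ := by
    filter_upwards [hmem] with lam hlam
    obtain ⟨h1, h2, _⟩ := hR lam hlam
    exact ⟨mul_pos hlam.1 h1, mul_le_mul_of_nonneg_left h2 hlam.1.le⟩
  have hgt : Tendsto g l (nhdsWithin 0 (Set.Ioi 0)) := by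
    apply tendsto_nhdsWithin_of_tendsto_nhds_of_eventually_within
    · apply squeeze_zero' (hgpos.mono fun lam h => h.1.le) (hgpos.mono fun lam h => h.2)
      have : Tendsto (fun lam : ℝ => lam * Δ) (nhds 0) (nhds (0 * Δ)) :=
        (tendsto_id.mul_const Δ)
      simpa using this.mono_left nhdsWithin_le_nhds
    · filter_upwards [hgpos] with lam h using h.1
  have hgt' : Tendsto g l (nhdsWithin 0 {(0:ℝ)}ᶜ) :=
    hgt.mono_right (nhdsWithin_mono 0 (fun x hx => ne_of_gt hx))
  have h1 : Tendsto (fun lam => Real.sin (g lam) / g lam) l (nhds 1) := hsinc.comp hgt'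
  -- sin(λΔ)/(λΔ) → 1
  have hmd : Tendsto (fun lam : ℝ => lam * Δ) l (nhdsWithin 0 {(0:ℝ)}ᶜ) := by
    apply tendsto_nhdsWithin_of_tendsto_nhds_of_eventually_within
    · have : Tendsto (fun lam : ℝ => lam * Δ) (nhds 0) (nhds (0 * Δ)) :=
        (tendsto_id.mul_const Δ)
      simpa using this.mono_left nhdsWithin_le_nhds
    · filter_upwards [hmem] with lam hlam
      exact ne_of_gt (mul_pos hlam.1 hΔ)
  have h2 : Tendsto (fun lam => Real.sin (lam * Δ) / (lam * Δ)) l (nhds 1) := hsinc.comp hmd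
  -- c → 0
  set c : ℝ → ℝ := fun lam => (Real.exp (-(K * lam ^ 2 * τ)) - 1) / (2 * K * τ) with hc
  have hct : Tendsto c l (nhds 0) := by
    have hcont : Continuous c := by
      apply Continuous.div_const
      exact (Real.continuous_exp.comp (by continuity)).sub continuous_const
    have := (hcont.tendsto 0).mono_left (nhdsWithin_le_nhds (s := Set.Ioi (0:ℝ)))
    simpa [hc] using this
  have hKτ : (2 : ℝ) * K * τ ≠ 0 := by positivity
  -- c ≤ 0 everywhere
  have hcle : ∀ lam : ℝ, c lam ≤ 0 := by
    intro lam
    apply div_nonpos_of_nonpos_of_nonneg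
    · have : Real.exp (-(K * lam ^ 2 * τ)) ≤ 1 :=
        Real.exp_le_one_iff.mpr (neg_nonpos.mpr (by positivity))
      linarith
    · positivity
  -- F → Δ/2
  have hF : Tendsto (fun lam => (Real.sin (lam * Δ) / lam - Δ / 2) / (1 - Δ * c lam)) l
      (nhds (Δ / 2)) := by
    have hnum : Tendsto (fun lam => Real.sin (lam * Δ) / lam - Δ / 2) l (nhds (Δ / 2)) := by
      have h3 : Tendsto (fun lam => Real.sin (lam * Δ) / (lam * Δ) * Δ - Δ / 2) l
          (nhds (1 * Δ - Δ / 2)) := ((h2.mul_const Δ).sub tendsto_const_nhds)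
      rw [show (1 : ℝ) * Δ - Δ / 2 = Δ / 2 by ring] at h3
      refine h3.congr' ?_
      filter_upwards [hmem] with lam hlam
      have hlam0 : lam ≠ 0 := ne_of_gt hlam.1
      field_simp
    have hden : Tendsto (fun lam => 1 - Δ * c lam) l (nhds 1) := by
      have := (tendsto_const_nhds (x := (1:ℝ)) (f := l)).sub ((hct.const_mul Δ))
      simpa using this
    have := hnum.div hden one_ne_zero
    rw [div_one] at this
    exact this
  -- sin(g) eventually positive
  have hsg : ∀ᶠ lam in l, Real.sin (g lam) / g lam > 1 / 2 :=
    h1.eventually (eventually_gt_nhds (by norm_num))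
  have hfinal : Tendsto (fun lam =>
      (Real.sin (lam * Δ) / lam - Δ / 2) / (1 - Δ * c lam) *
        (Real.sin (g lam) / g lam)⁻¹) l (nhds (Δ / 2 * 1⁻¹)) :=
    hF.mul (h1.inv₀ one_ne_zero)
  rw [show Δ / 2 * (1:ℝ)⁻¹ = Δ / 2 by ring] at hfinal
  refine hfinal.congr' ?_
  filter_upwards [hmem, hgpos, hsg] with lam hlam hgp hsgp
  obtain ⟨hRpos, hRle, heq⟩ := hR lam hlam
  have hlam0 : lam ≠ 0 := ne_of_gt hlam.1
  have hgne : g lam ≠ 0 := ne_of_gt hgp.1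
  have hsgne : Real.sin (g lam) ≠ 0 := by
    intro h0
    rw [h0] at hsgp; norm_num at hsgp
  have hden : (1 : ℝ) - Δ * c lam ≠ 0 := by
    have := mul_nonpos_of_nonneg_of_nonpos hΔ.le (hcle lam)
    intro h0; nlinarith
  -- from the equation: sin(g) * (1 - Δ c) = sin(λΔ) - λΔ/2
  have key : Real.sin (lam * R lam) * (1 - Δ * c lam) = Real.sin (lam * Δ) - lam * Δ / 2 := by
    have h' : Δ * Real.sin (lam * R lam) * (Real.exp (-(K * lam ^ 2 * τ)) - 1) / (2 * K * τ)
        = Real.sin (lam * R lam) * (Δ * c lam) := by rw [hc]; ring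
    rw [h'] at heq
    linear_combination heq
  have hsgne' : Real.sin (lam * R lam) ≠ 0 := hsgne
  have hgne' : lam * R lam ≠ 0 := hgne
  show (Real.sin (lam * Δ) / lam - Δ / 2) / (1 - Δ * c lam) *
      (Real.sin (lam * R lam) / (lam * R lam))⁻¹ = R lam
  rw [inv_div, div_mul_div_comm, div_eq_iff (mul_ne_zero hden hsgne')]
  have e : Real.sin (lam * Δ) / lam * lam = Real.sin (lam * Δ) := div_mul_cancel₀ _ hlam0
  linear_combination R lam * e - R lam * key
end

section
/- Fix K > 0, τ > 0, Δ > 0. There exist constants C > 0 and λ₀ > 0 such that for every λ ∈ (0, λ₀), any real number R with 0 < R ≤ Δ satisfying the transcendental equation sin(λR) - sin(λΔ) + λΔ/2 = Δ·sin(λR)·(e^{-Kλ²τ} - 1)/(2Kτ) obeys |R - Δ/2| ≤ C·λ. (That is, R₀^{bd} - Δ/2 = O(λ) as λ → 0.) -/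
lemma sin_close_aux (x : ℝ) (h0 : 0 < x) (h1 : x ≤ 1) :
    |Real.sin x - x| ≤ x ^ 3 / 4 := by
  have h2 := Real.sin_gt_sub_cube h0
  have h3 : Real.sin x ≤ x := Real.sin_le h0.le
  rw [abs_sub_comm, abs_of_nonneg (by linarith)]
  linarith

lemma sin_abs_le_aux (x : ℝ) (h0 : 0 < x) (h1 : x ≤ 1) : |Real.sin x| ≤ x := by
  have h2 := Real.sin_gt_sub_cube h0
  have h3 : Real.sin x ≤ x := Real.sin_le h0.le
  have hx2 : x ^ 2 <= 1 := by nlinarith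
  have hx3 : x ^ 3 <= x := by nlinarith
  rw [abs_of_nonneg (by linarith)]
  exact h3

/-- `R₀^{bd} - Δ/2 = O(λ)`: there are `C > 0` and `λ₀ > 0` such that any
solution `R ∈ (0, Δ]` of the boundary-dominated transcendental equation with
`λ ∈ (0, λ₀)` satisfies `|R - Δ/2| ≤ C·λ`. -/
theorem stmt_6 (K τ Δ : ℝ) (hK : 0 < K) (hτ : 0 < τ) (hΔ : 0 < Δ) :
    ∃ C > (0 : ℝ), ∃ lam₀ > (0 : ℝ), ∀ lam ∈ Set.Ioo (0 : ℝ) lam₀, ∀ R : ℝ,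
      0 < R → R ≤ Δ →
      Real.sin (lam * R) - Real.sin (lam * Δ) + lam * Δ / 2 =
        Δ * Real.sin (lam * R) *
          (Real.exp (-(K * lam ^ 2 * τ)) - 1) / (2 * K * τ) →
      |R - Δ / 2| ≤ C * lam := by
  refine ⟨Δ ^ 3 / 2 + Δ ^ 2 / 2, by positivity, min 1 (1 / Δ),
    lt_min one_pos (by positivity), ?_⟩
  rintro lam ⟨hl0, hl1⟩ R hR0 hRΔ heq
  have hlam1 : lam ≤ 1 := le_of_lt (lt_of_lt_of_le hl1 (min_le_left _ _))
  have hlamΔ : lam * Δ ≤ 1 := by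
    have h := lt_of_lt_of_le hl1 (min_le_right _ _)
    have : lam * Δ < (1 / Δ) * Δ := by nlinarith
    rw [one_div_mul_cancel hΔ.ne'] at this
    exact this.le
  have hlR0 : 0 < lam * R := by positivity
  have hlΔ0 : 0 < lam * Δ := by positivity
  have hlRΔ : lam * R ≤ lam * Δ := by nlinarith
  have hlR1 : lam * R ≤ 1 := hlRΔ.trans hlamΔ
  have hsR := sin_close_aux (lam * R) hlR0 hlR1
  have hsΔ := sin_close_aux (lam * Δ) hlΔ0 hlamΔ
  have hsRabs := sin_abs_le_aux (lam * R) hlR0 hlR1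
  -- exp bound
  have ht0 : 0 ≤ K * lam ^ 2 * τ := by positivity
  have hexp : |Real.exp (-(K * lam ^ 2 * τ)) - 1| ≤ K * lam ^ 2 * τ := by
    have h1 : Real.exp (-(K * lam ^ 2 * τ)) ≤ 1 :=
      Real.exp_le_one_iff.mpr (by linarith)
    have h2 := Real.add_one_le_exp (-(K * lam ^ 2 * τ))
    rw [abs_of_nonpos (by linarith)]
    linarith
  -- bound on the RHS term
  have hrhs : |Δ * Real.sin (lam * R) * (Real.exp (-(K * lam ^ 2 * τ)) - 1) /
      (2 * K * τ)| ≤ Δ ^ 2 * lam ^ 3 / 2 := by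
    rw [abs_div, abs_of_pos (by positivity : (0:ℝ) < 2 * K * τ),
      div_le_div_iff₀ (by positivity) (by positivity)]
    have h1 : |Δ * Real.sin (lam * R) * (Real.exp (-(K * lam ^ 2 * τ)) - 1)| =
        Δ * |Real.sin (lam * R)| * |Real.exp (-(K * lam ^ 2 * τ)) - 1| := by
      rw [abs_mul, abs_mul, abs_of_pos hΔ]
    rw [h1]
    have hsa : |Real.sin (lam * R)| ≤ lam * Δ := hsRabs.trans hlRΔ
    have hprod : |Real.sin (lam * R)| * |Real.exp (-(K * lam ^ 2 * τ)) - 1| ≤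
        (lam * Δ) * (K * lam ^ 2 * τ) :=
      mul_le_mul hsa hexp (abs_nonneg _) (by positivity)
    have := mul_le_mul_of_nonneg_left hprod (by positivity : (0:ℝ) ≤ 2 * Δ)
    nlinarith [this]
  -- key identity
  have hid : lam * R - lam * Δ / 2 =
      -(Real.sin (lam * R) - lam * R) + (Real.sin (lam * Δ) - lam * Δ) +
        Δ * Real.sin (lam * R) * (Real.exp (-(K * lam ^ 2 * τ)) - 1) /
          (2 * K * τ) := by linarith
  have hkey : |lam * R - lam * Δ / 2| ≤ lam ^ 3 * (Δ ^ 3 / 2 + Δ ^ 2 / 2) := by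
    rw [hid]
    calc |-(Real.sin (lam * R) - lam * R) + (Real.sin (lam * Δ) - lam * Δ) +
          Δ * Real.sin (lam * R) * (Real.exp (-(K * lam ^ 2 * τ)) - 1) /
            (2 * K * τ)|
        ≤ |-(Real.sin (lam * R) - lam * R) + (Real.sin (lam * Δ) - lam * Δ)| +
          |Δ * Real.sin (lam * R) * (Real.exp (-(K * lam ^ 2 * τ)) - 1) /
            (2 * K * τ)| := abs_add_le _ _
      _ ≤ (|Real.sin (lam * R) - lam * R| + |Real.sin (lam * Δ) - lam * Δ|) +
          Δ ^ 2 * lam ^ 3 / 2 := by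
            gcongr
            calc |-(Real.sin (lam * R) - lam * R) + (Real.sin (lam * Δ) - lam * Δ)|
                ≤ |-(Real.sin (lam * R) - lam * R)| + |Real.sin (lam * Δ) - lam * Δ| :=
                  abs_add_le _ _
              _ = |Real.sin (lam * R) - lam * R| + |Real.sin (lam * Δ) - lam * Δ| := by
                  rw [abs_neg]
      _ ≤ lam ^ 3 * (Δ ^ 3 / 2 + Δ ^ 2 / 2) := by
            have h3 : (lam * R) ^ 3 ≤ (lam * Δ) ^ 3 :=
              pow_le_pow_left₀ hlR0.le hlRΔ 3
            have h4 : (lam * Δ) ^ 3 = lam ^ 3 * Δ ^ 3 := mul_pow _ _ _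
            linarith
  have habs : |R - Δ / 2| = |lam * R - lam * Δ / 2| / lam := by
    rw [show lam * R - lam * Δ / 2 = lam * (R - Δ / 2) by ring, abs_mul,
      abs_of_pos hl0, mul_div_cancel_left₀ _ hl0.ne']
  rw [habs, div_le_iff₀ hl0]
  calc |lam * R - lam * Δ / 2| ≤ lam ^ 3 * (Δ ^ 3 / 2 + Δ ^ 2 / 2) := hkey
    _ ≤ lam ^ 2 * (Δ ^ 3 / 2 + Δ ^ 2 / 2) := by
          have hp : lam ^ 3 ≤ lam ^ 2 := by nlinarith [sq_nonneg lam]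
          exact mul_le_mul_of_nonneg_right hp (by positivity)
    _ = (Δ ^ 3 / 2 + Δ ^ 2 / 2) * lam * lam := by ring
end

section
/- Let K > 0, q ≠ 0, and 0 < r_w < r_e, Δ > 0, R₀ > 0 be real numbers. Set |U| = π·(r_e² - r_w²), C = q/|U|, C₁ = C·r_e²/2, C₂ = C·r_w²/4 - C₁·ln r_w, and define w(r) = -K⁻¹·(-C·r²/4 + C₁·ln r + C₂). Then the pseudo-steady-state material-balance equation 4K·(w(Δ) - w(R₀)) = -q·(1 - Δ²/|U|) holds if and only if -π + R₀²/r_e² + π·r_w²/r_e² = -2·ln(Δ/R₀). -/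
/-- 2-D radial PSS flow: the pseudo-steady-state material-balance equation
`4K·(w(Δ) - w(R₀)) = -q·(1 - Δ²/|U|)` for the explicit profile `w` holds iff
`-π + R₀²/r_e² + π·r_w²/r_e² = -2·ln(Δ/R₀)`. -/
theorem stmt_7 (K q r_w r_e Δ R₀ : ℝ) (hK : 0 < K) (hq : q ≠ 0)
    (hrw : 0 < r_w) (hrwe : r_w < r_e) (hΔ : 0 < Δ) (hR : 0 < R₀)
    (U C C₁ C₂ : ℝ) (w : ℝ → ℝ)
    (hU : U = Real.pi * (r_e ^ 2 - r_w ^ 2))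
    (hC : C = q / U)
    (hC₁ : C₁ = C * r_e ^ 2 / 2)
    (hC₂ : C₂ = C * r_w ^ 2 / 4 - C₁ * Real.log r_w)
    (hw : ∀ r, w r = -K⁻¹ * (-C * r ^ 2 / 4 + C₁ * Real.log r + C₂)) :
    4 * K * (w Δ - w R₀) = -q * (1 - Δ ^ 2 / U) ↔
      -Real.pi + R₀ ^ 2 / r_e ^ 2 + Real.pi * r_w ^ 2 / r_e ^ 2 =
        -2 * Real.log (Δ / R₀) := by
  have hre : 0 < r_e := hrw.trans hrwe
  have hS : 0 < r_e ^ 2 - r_w ^ 2 := by nlinarith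
  have hU0 : U ≠ 0 := by rw [hU]; exact (mul_pos Real.pi_pos hS).ne'
  have hC0 : C ≠ 0 := by rw [hC]; exact div_ne_zero hq hU0
  have hre0 : (r_e : ℝ) ^ 2 ≠ 0 := by positivity
  have hK0 : K ≠ 0 := hK.ne'
  have hqU : q = C * U := by rw [hC, div_mul_cancel₀ q hU0]
  set X : ℝ := Real.pi * (r_e ^ 2 - r_w ^ 2) - R₀ ^ 2 -
      2 * r_e ^ 2 * (Real.log Δ - Real.log R₀) with hX
  have hA : 4 * K * (w Δ - w R₀) - (-q * (1 - Δ ^ 2 / U)) = C * X := by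
    rw [hw, hw, hC₁, hqU, hU, hX]
    field_simp
    ring
  have hB : ((-Real.pi + R₀ ^ 2 / r_e ^ 2 + Real.pi * r_w ^ 2 / r_e ^ 2) -
      (-2 * Real.log (Δ / R₀))) * r_e ^ 2 = -X := by
    rw [Real.log_div hΔ.ne' hR.ne', hX]
    field_simp
    ring
  constructor
  · intro h
    have hx : C * X = 0 := by rw [← hA, h]; ring
    have hx0 : X = 0 := by
      rcases mul_eq_zero.1 hx with h' | h'
      · exact absurd h' hC0
      · exact h'
    have : ((-Real.pi + R₀ ^ 2 / r_e ^ 2 + Real.pi * r_w ^ 2 / r_e ^ 2) -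
        (-2 * Real.log (Δ / R₀))) * r_e ^ 2 = 0 := by rw [hB, hx0, neg_zero]
    have := (mul_eq_zero.1 this).resolve_right hre0
    linarith [this]
  · intro h
    have hx0 : X = 0 := by
      have h0 : ((-Real.pi + R₀ ^ 2 / r_e ^ 2 + Real.pi * r_w ^ 2 / r_e ^ 2) -
          (-2 * Real.log (Δ / R₀))) = 0 := by rw [h]; ring
      have hz : -X = 0 := by rw [← hB, h0, zero_mul]
      linarith
    have : 4 * K * (w Δ - w R₀) - (-q * (1 - Δ ^ 2 / U)) = 0 := by
      rw [hA, hx0, mul_zero]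
    linarith [this]
end

section
/- Let 0 < r_w < Δ < r_e be real numbers satisfying Δ² + π·r_w² < π·r_e². Then there exists a unique R₀ ∈ (0, Δ) such that -π + R₀²/r_e² + π·r_w²/r_e² = -2·ln(Δ/R₀). -/
/-- Existence and uniqueness of the 2-D PSS Peaceman well-block radius:
if `0 < r_w < Δ < r_e` and `Δ² + π·r_w² < π·r_e²`, then there exists a
unique `R₀ ∈ (0, Δ)` solving `-π + R₀²/r_e² + π·r_w²/r_e² = -2·ln(Δ/R₀)`. -/
theorem stmt_8 (r_w Δ r_e : ℝ) (hrw : 0 < r_w) (hwΔ : r_w < Δ) (hΔe : Δ < r_e)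
    (h : Δ ^ 2 + Real.pi * r_w ^ 2 < Real.pi * r_e ^ 2) :
    ∃! R₀ : ℝ, R₀ ∈ Set.Ioo (0 : ℝ) Δ ∧
      -Real.pi + R₀ ^ 2 / r_e ^ 2 + Real.pi * r_w ^ 2 / r_e ^ 2 =
        -2 * Real.log (Δ / R₀) := by
  have hΔ : 0 < Δ := hrw.trans hwΔ
  have hre : 0 < r_e := hΔ.trans hΔe
  set G : ℝ → ℝ := fun x => -Real.pi + x ^ 2 / r_e ^ 2 +
      Real.pi * r_w ^ 2 / r_e ^ 2 + 2 * Real.log (Δ / x) with hG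
  -- strict decrease of G on (0, Δ]
  have key : ∀ a b : ℝ, 0 < a → a < b → b ≤ Δ → G b < G a := by
    intro a b ha hab hbΔ
    have hb : 0 < b := ha.trans hab
    have hbe : b < r_e := lt_of_le_of_lt hbΔ hΔe
    have hlog : Real.log (a / b) ≤ a / b - 1 :=
      Real.log_le_sub_one_of_pos (by positivity)
    have hlogsplit : Real.log (Δ / a) - Real.log (Δ / b) = -Real.log (a / b) := by
      rw [Real.log_div (ne_of_gt hΔ) (ne_of_gt ha),
        Real.log_div (ne_of_gt hΔ) (ne_of_gt hb),
        Real.log_div (ne_of_gt ha) (ne_of_gt hb)]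
      ring
    have h3 : (1 : ℝ) - a / b = (b - a) / b := by field_simp
    have h4 : (b ^ 2 - a ^ 2) / r_e ^ 2 < 2 * ((b - a) / b) := by
      rw [show (2:ℝ) * ((b - a) / b) = (2 * (b - a)) / b by ring,
        div_lt_div_iff₀ (by positivity) hb]
      have hba : 0 < b - a := sub_pos.2 hab
      have h1 : (b + a) * b < 2 * r_e ^ 2 := by nlinarith
      nlinarith [mul_lt_mul_of_pos_left h1 hba]
    have h5 : (b ^ 2 - a ^ 2) / r_e ^ 2 < 2 * (-Real.log (a / b)) := by
      nlinarith
    simp only [hG]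
    have : b ^ 2 / r_e ^ 2 - a ^ 2 / r_e ^ 2 = (b ^ 2 - a ^ 2) / r_e ^ 2 := by ring
    linarith [h5, hlogsplit, this]
  -- value at Δ
  have hGΔ : G Δ < 0 := by
    have h1 : Δ / Δ = 1 := div_self (ne_of_gt hΔ)
    have h2 : Δ ^ 2 / r_e ^ 2 + Real.pi * r_w ^ 2 / r_e ^ 2 < Real.pi := by
      rw [← add_div, div_lt_iff₀ (by positivity)]
      linarith
    simp only [hG, h1, Real.log_one]
    linarith
  -- value at R₁ := Δ * exp (-(π/2+1))
  set R₁ : ℝ := Δ * Real.exp (-(Real.pi / 2 + 1)) with hR₁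
  have hR₁pos : 0 < R₁ := by positivity
  have hR₁lt : R₁ < Δ := by
    have : Real.exp (-(Real.pi / 2 + 1)) < 1 := by
      rw [Real.exp_lt_one_iff]
      have := Real.pi_pos
      linarith
    calc R₁ = Δ * Real.exp (-(Real.pi / 2 + 1)) := rfl
      _ < Δ * 1 := by exact (mul_lt_mul_of_pos_left this hΔ)
      _ = Δ := mul_one Δ
  have hGR₁ : 0 < G R₁ := by
    have hdiv : Δ / R₁ = Real.exp (Real.pi / 2 + 1) := by
      rw [hR₁, div_eq_iff (by positivity), mul_comm Δ, ← mul_assoc,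
        ← Real.exp_add,
        show Real.pi / 2 + 1 + -(Real.pi / 2 + 1) = 0 by ring,
        Real.exp_zero, one_mul]
    have hlog : Real.log (Δ / R₁) = Real.pi / 2 + 1 := by
      rw [hdiv, Real.log_exp]
    simp only [hG, hlog]
    have : (0:ℝ) ≤ R₁ ^ 2 / r_e ^ 2 := by positivity
    have : (0:ℝ) ≤ Real.pi * r_w ^ 2 / r_e ^ 2 := by positivity
    nlinarith
  -- continuity of G on [R₁, Δ]
  have hcont : ContinuousOn G (Set.Icc R₁ Δ) := by
    apply ContinuousOn.add
    · apply ContinuousOn.add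
      · apply ContinuousOn.add continuousOn_const
        exact (continuousOn_pow 2).div_const _
      · exact continuousOn_const
    · apply ContinuousOn.mul continuousOn_const
      apply ContinuousOn.log
      · exact continuousOn_const.div continuousOn_id
          fun x hx => ne_of_gt (lt_of_lt_of_le hR₁pos hx.1)
      · intro x hx
        have hx0 : 0 < x := lt_of_lt_of_le hR₁pos hx.1
        positivity
  -- IVT
  have hsub := intermediate_value_Ioo' (le_of_lt hR₁lt) hcont
  have h0mem : (0:ℝ) ∈ Set.Ioo (G Δ) (G R₁) := ⟨hGΔ, hGR₁⟩
  obtain ⟨R₀, hR₀mem, hR₀eq⟩ := hsub h0mem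
  refine ⟨R₀, ⟨⟨hR₁pos.trans hR₀mem.1, hR₀mem.2⟩, ?_⟩, ?_⟩
  · simp only [hG] at hR₀eq
    linarith
  · rintro y ⟨⟨hy0, hyΔ⟩, hyeq⟩
    have hGy : G y = 0 := by simp only [hG]; linarith
    have hGR₀ : G R₀ = 0 := hR₀eq
    have hR₀pos : 0 < R₀ := hR₁pos.trans hR₀mem.1
    rcases lt_trichotomy y R₀ with hlt | heq | hgt
    · have := key y R₀ hy0 hlt (le_of_lt hR₀mem.2)
      linarith
    · exact heq
    · have := key R₀ y hR₀pos hgt (le_of_lt hyΔ)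
      linarith
end

section
/- Fix real numbers 0 < r_w < Δ. Suppose R : (0, ∞) → ℝ satisfies, for all sufficiently large r_e, 0 < R(r_e) ≤ Δ and -π + R(r_e)²/r_e² + π·r_w²/r_e² = -2·ln(Δ/R(r_e)). Then R(r_e) converges to Δ·e^{-π/2} as r_e → ∞; in particular, in the limit the well-block radius satisfies the classical Peaceman relation ln(Δ/R₀) = π/2. -/
open Filter Topology

/-!
Solving the PSS equation for the logarithm gives
`log (Δ / R) = (π - R² / r_e² - π r_w² / r_e²) / 2`. Since `0 < R ≤ Δ` keeps `R` bounded, both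
correction terms vanish as `r_e → ∞`, so `log (Δ / R) → π / 2` and `R = Δ e^{-log (Δ / R)}`
tends to `Δ e^{-π/2}`.
-/

lemma Real.eq_mul_exp_neg_of_log_div_eq {x y a : ℝ} (hx : 0 < x) (hy : 0 < y)
    (h : Real.log (y / x) = a) : x = y * Real.exp (-a) := by
  rw [Real.exp_neg, ← h, Real.exp_log (div_pos hy hx)]
  field_simp

lemma tendsto_div_sq_atTop_zero_of_eventually_norm_le {f : ℝ → ℝ} {C : ℝ}
    (hf : ∀ᶠ r in atTop, ‖f r‖ ≤ C) : Tendsto (fun r => f r / r ^ 2) atTop (𝓝 0) := by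
  have hinv : Tendsto (fun r : ℝ => (r ^ 2)⁻¹) atTop (𝓝 0) :=
    tendsto_inv_atTop_zero.comp (tendsto_pow_atTop two_ne_zero)
  simpa only [div_eq_inv_mul] using
    hinv.zero_mul_isBoundedUnder_le (isBoundedUnder_of_eventually_le hf)

theorem stmt_9_general (r_w Δ : ℝ) (R : ℝ → ℝ)
    (hR : ∀ᶠ r_e in atTop, 0 < R r_e ∧ R r_e ≤ Δ ∧
      -Real.pi + (R r_e) ^ 2 / r_e ^ 2 + Real.pi * r_w ^ 2 / r_e ^ 2 =
        -2 * Real.log (Δ / R r_e)) :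
    Tendsto R atTop (nhds (Δ * Real.exp (-Real.pi / 2))) := by
  set a : ℝ → ℝ := fun r => (Real.pi - R r ^ 2 / r ^ 2 - Real.pi * r_w ^ 2 / r ^ 2) / 2
  have hΔ : 0 < Δ := by
    obtain ⟨r, hRpos, hRle, -⟩ := hR.exists
    exact hRpos.trans_le hRle
  have hR_eq : ∀ᶠ r in atTop, Δ * Real.exp (-a r) = R r := by
    filter_upwards [hR] with r ⟨hRpos, _, hpss⟩
    exact (Real.eq_mul_exp_neg_of_log_div_eq hRpos hΔ (by simp only [a]; linarith)).symm
  have hR_sq : Tendsto (fun r => R r ^ 2 / r ^ 2) atTop (𝓝 0) := by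
    refine tendsto_div_sq_atTop_zero_of_eventually_norm_le (C := Δ ^ 2) ?_
    filter_upwards [hR] with r ⟨hRpos, hRle, _⟩
    rw [norm_pow, Real.norm_of_nonneg hRpos.le]
    gcongr
  have hrw_sq : Tendsto (fun r => Real.pi * r_w ^ 2 / r ^ 2) atTop (𝓝 0) :=
    tendsto_div_sq_atTop_zero_of_eventually_norm_le (Eventually.of_forall fun _ => le_rfl)
  have ha : Tendsto a atTop (𝓝 (Real.pi / 2)) := by
    simpa using ((tendsto_const_nhds.sub hR_sq).sub hrw_sq).div_const (2 : ℝ)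
  rw [neg_div]
  exact ((Real.continuous_exp.tendsto _).comp ha.neg |>.const_mul Δ).congr' hR_eq

/-- If `R(r_e)` solves the 2-D PSS well-block equation with `0 < R(r_e) ≤ Δ`
for all sufficiently large `r_e`, then `R(r_e) → Δ·e^{-π/2}` as `r_e → ∞`
(the classical Peaceman relation `ln(Δ/R₀) = π/2`). -/
theorem stmt_9 (r_w Δ : ℝ) (hrw : 0 < r_w) (hwΔ : r_w < Δ) (R : ℝ → ℝ)
    (hR : ∀ᶠ r_e in atTop, 0 < R r_e ∧ R r_e ≤ Δ ∧
      -Real.pi + (R r_e) ^ 2 / r_e ^ 2 + Real.pi * r_w ^ 2 / r_e ^ 2 =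
        -2 * Real.log (Δ / R r_e)) :
    Tendsto R atTop (nhds (Δ * Real.exp (-Real.pi / 2))) :=
  stmt_9_general r_w Δ R hR
end

section
/- Fix real numbers r_w > 0 and Δ > 0. Let r₁, r₂, R₁, R₂ be real numbers with 0 < r₁ < r₂, 0 < R₁ < r₁, 0 < R₂ < r₂, and suppose -π + R₁²/r₁² + π·r_w²/r₁² = -2·ln(Δ/R₁) and -π + R₂²/r₂² + π·r_w²/r₂² = -2·ln(Δ/R₂). Then R₂ < R₁; that is, the 2-D pseudo-steady-state well-block radius R₀^{PSS}(r_e, Δ) is strictly decreasing as a function of the exterior radius r_e. -/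
/-- Monotonicity of the 2-D PSS well-block radius: if `R₁`, `R₂` solve the
PSS well-block equation for exterior radii `r₁ < r₂` (with the applicability
conditions `0 < R₁ < r₁` and `0 < R₂ < r₂`), then `R₂ < R₁`. -/
theorem stmt_10 (r_w Δ r₁ r₂ R₁ R₂ : ℝ) (hrw : 0 < r_w) (hΔ : 0 < Δ)
    (hr₁ : 0 < r₁) (hr₁₂ : r₁ < r₂)
    (hR₁0 : 0 < R₁) (hR₁ : R₁ < r₁) (hR₂0 : 0 < R₂) (hR₂ : R₂ < r₂)
    (h₁ : -Real.pi + R₁ ^ 2 / r₁ ^ 2 + Real.pi * r_w ^ 2 / r₁ ^ 2 =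
      -2 * Real.log (Δ / R₁))
    (h₂ : -Real.pi + R₂ ^ 2 / r₂ ^ 2 + Real.pi * r_w ^ 2 / r₂ ^ 2 =
      -2 * Real.log (Δ / R₂)) :
    R₂ < R₁ := by
  by_contra hcon
  push_neg at hcon  -- hcon : R₁ ≤ R₂
  have hr₂ : 0 < r₂ := hr₁.trans hr₁₂
  rw [Real.log_div hΔ.ne' hR₁0.ne'] at h₁
  rw [Real.log_div hΔ.ne' hR₂0.ne'] at h₂
  -- A : the r_w-terms strictly decrease in r
  have A : Real.pi * r_w ^ 2 / r₂ ^ 2 < Real.pi * r_w ^ 2 / r₁ ^ 2 := by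
    apply div_lt_div_of_pos_left (by positivity) (by positivity)
    nlinarith
  -- B : R₁²/r₂² ≤ R₁²/r₁²
  have B : R₁ ^ 2 / r₂ ^ 2 ≤ R₁ ^ 2 / r₁ ^ 2 := by
    apply div_le_div_of_nonneg_left (by positivity) (by positivity)
    nlinarith
  -- C : (R₂² − R₁²)/r₂² ≤ 2 − 2·R₁/R₂
  have hC' : 2 - 2 * (R₁ / R₂) = 2 * (R₂ - R₁) / R₂ := by
    field_simp
  have C : R₂ ^ 2 / r₂ ^ 2 - R₁ ^ 2 / r₂ ^ 2 ≤ 2 - 2 * (R₁ / R₂) := by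
    rw [hC', div_sub_div_same, div_le_div_iff₀ (by positivity) hR₂0]
    nlinarith [sq_nonneg (R₂ - R₁), mul_nonneg (sub_nonneg.2 hcon) (sub_nonneg.2 hR₂.le)]
  -- log inequality : log(R₁/R₂) ≤ R₁/R₂ − 1
  have hlog := Real.log_le_sub_one_of_pos (show (0:ℝ) < R₁ / R₂ by positivity)
  rw [Real.log_div hR₁0.ne' hR₂0.ne'] at hlog
  linarith
end
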